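/- Let G be a beer graph satisfying the generalized triangle inequality, and let u, v, w, w' be vertices such that (u,w), (w,v), (u,w'), (w',v) are edges of G and every walk in G from u to v visits w or w'. Then dist_B(u,v) is the minimum of the four quantities: dist_B(u,w) + ω(w,v); ω(u,w) + dist_B(w,v); dist_B(u,w') + ω(w',v); and ω(u,w') + dist_B(w',v). -/

import Mathlib

open scoped ENNReal

/-- The weight of a walk: the sum, with multiplicity, of the weights of its edges. -/
noncomputable def walkWeight {V : Type*} (ω : V → V → ℝ≥0∞) {G : SimpleGraph V}
    {u v : V} (p : G.Walk u v) : ℝ≥0∞ :=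
  (p.darts.map fun d => ω d.toProd.1 d.toProd.2).sum

/-- The (weighted) distance: the infimum in ℝ≥0∞ of the weights of all walks. -/
noncomputable def gDist {V : Type*} (G : SimpleGraph V) (ω : V → V → ℝ≥0∞) (u v : V) : ℝ≥0∞ :=
  ⨅ p : G.Walk u v, walkWeight ω p

/-- The beer distance: the infimum in ℝ≥0∞ of the weights of all walks visiting
a vertex of `B`. -/
noncomputable def beerDist {V : Type*} (G : SimpleGraph V) (ω : V → V → ℝ≥0∞)
    (B : Set V) (u v : V) : ℝ≥0∞ :=
  ⨅ (p : G.Walk u v) (_ : ∃ b ∈ B, b ∈ p.support), walkWeight ω p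

/-! Splitting a beer walk from `u` to `v` at the cut vertex `w` (or `w'`) it visits, the beer
store lies on one of the two halves: that half weighs at least the beer distance, the other at
least the plain distance, which equals the edge weight by the generalized triangle inequality.
Conversely, concatenating a beer walk with an arbitrary walk bounds `dist_B(u,v)` by each of the
four sums. -/

section

open SimpleGraph

variable {V : Type*} {G : SimpleGraph V} (ω : V → V → ℝ≥0∞) (B : Set V)

lemma walkWeight_append {a b c : V} (p : G.Walk a b) (q : G.Walk b c) :
    walkWeight ω (p.append q) = walkWeight ω p + walkWeight ω q := by
  simp [walkWeight, Walk.darts_append]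

lemma gDist_le_walkWeight {a b : V} (p : G.Walk a b) : gDist G ω a b ≤ walkWeight ω p :=
  iInf_le _ p

lemma beerDist_le_walkWeight {a b : V} (p : G.Walk a b) (hp : ∃ x ∈ B, x ∈ p.support) :
    beerDist G ω B a b ≤ walkWeight ω p :=
  iInf₂_le p hp

lemma beerDist_le_beerDist_add_gDist (u x v : V) :
    beerDist G ω B u v ≤ beerDist G ω B u x + gDist G ω x v := by
  refine ENNReal.le_iInf_add_iInf fun p q => ?_
  rw [ENNReal.iInf_add]
  refine le_iInf fun ⟨b, hb, hbp⟩ => ?_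
  rw [← walkWeight_append]
  exact beerDist_le_walkWeight ω B _ ⟨b, hb, Walk.mem_support_append_iff .. |>.2 (.inl hbp)⟩

lemma beerDist_le_gDist_add_beerDist (u x v : V) :
    beerDist G ω B u v ≤ gDist G ω u x + beerDist G ω B x v := by
  refine ENNReal.le_iInf_add_iInf fun p q => ?_
  rw [ENNReal.add_iInf]
  refine le_iInf fun ⟨b, hb, hbq⟩ => ?_
  rw [← walkWeight_append]
  exact beerDist_le_walkWeight ω B _ ⟨b, hb, Walk.mem_support_append_iff .. |>.2 (.inr hbq)⟩

lemma min_le_walkWeight_of_mem_support [DecidableEq V] {u x v : V} (p : G.Walk u v)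
    (hx : x ∈ p.support) (hB : ∃ b ∈ B, b ∈ p.support) :
    min (beerDist G ω B u x + gDist G ω x v) (gDist G ω u x + beerDist G ω B x v) ≤
      walkWeight ω p := by
  obtain ⟨b, hb, hbp⟩ := hB
  rw [← p.take_spec hx] at hbp ⊢
  rw [walkWeight_append]
  rcases Walk.mem_support_append_iff .. |>.1 hbp with hbu | hbv
  · exact min_le_of_left_le <| add_le_add
      (beerDist_le_walkWeight ω B _ ⟨b, hb, hbu⟩) (gDist_le_walkWeight ω _)
  · exact min_le_of_right_le <| add_le_add
      (gDist_le_walkWeight ω _) (beerDist_le_walkWeight ω B _ ⟨b, hb, hbv⟩)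

end

theorem beerDist_through_two_vertices_general {V : Type*} [DecidableEq V]
    (G : SimpleGraph V) (ω : V → V → ℝ≥0∞) (B : Set V)
    (hgti : ∀ a b, G.Adj a b → gDist G ω a b = ω a b)
    (u v w w' : V)
    (h1 : G.Adj u w) (h2 : G.Adj w v) (h3 : G.Adj u w') (h4 : G.Adj w' v)
    (hvisit : ∀ p : G.Walk u v, w ∈ p.support ∨ w' ∈ p.support) :
    beerDist G ω B u v =
      min (min (beerDist G ω B u w + ω w v) (ω u w + beerDist G ω B w v))
          (min (beerDist G ω B u w' + ω w' v) (ω u w' + beerDist G ω B w' v)) := by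
  rw [← hgti _ _ h1, ← hgti _ _ h2, ← hgti _ _ h3, ← hgti _ _ h4]
  refine le_antisymm ?_ (le_iInf₂ fun p hB => ?_)
  · simp only [le_min_iff, beerDist_le_beerDist_add_gDist, beerDist_le_gDist_add_beerDist,
      and_self]
  · rcases hvisit p with hw | hw'
    · exact min_le_of_left_le (min_le_walkWeight_of_mem_support ω B p hw hB)
    · exact min_le_of_right_le (min_le_walkWeight_of_mem_support ω B p hw' hB)

/-- In a beer graph satisfying the generalized triangle inequality,
if every walk from u to v visits w or w', where (u,w), (w,v), (u,w'), (w',v) are edges,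
then the beer distance from u to v is the minimum of the four listed quantities. -/
theorem beerDist_through_two_vertices {V : Type*} [Fintype V] [DecidableEq V]
    (G : SimpleGraph V) (ω : V → V → ℝ≥0∞) (B : Set V)
    (hsymm : ∀ a b, ω a b = ω b a)
    (hpos : ∀ a b, G.Adj a b → 0 < ω a b ∧ ω a b < ⊤)
    (hgti : ∀ a b, G.Adj a b → gDist G ω a b = ω a b)
    (u v w w' : V)
    (h1 : G.Adj u w) (h2 : G.Adj w v) (h3 : G.Adj u w') (h4 : G.Adj w' v)
    (hvisit : ∀ p : G.Walk u v, w ∈ p.support ∨ w' ∈ p.support) :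
    beerDist G ω B u v =
      min (min (beerDist G ω B u w + ω w v) (ω u w + beerDist G ω B w v))
          (min (beerDist G ω B u w' + ω w' v) (ω u w' + beerDist G ω B w' v)) :=
  beerDist_through_two_vertices_general G ω B hgti u v w w' h1 h2 h3 h4 hvisit
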